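/- Let y ∈ R^n have nonnegative entries and distinct sorted values y_1' > y_2' > ... > y_s' with multiplicities k_1, ..., k_s (s ≥ 2), and let x ∈ R^n satisfy x ≺ y but not y ≺ x (i.e., x^↓ ≠ y^↓). Then there exist indices 1 ≤ i < j ≤ s and ε > 0 such that the vector z, obtained from y^↓ by replacing one occurrence of y_i' with y_i' - ε and one occurrence of y_j' with y_j' + ε (keeping it sorted non-increasingly), satisfies x ≺ z ≺ y. -/

import Mathlib

open Finset

/-- `eSum v m` is the sum of the `m` largest entries of `v`
(the supremum of sums over subsets of cardinality `m`). -/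
noncomputable def eSum {ι : Type} [Fintype ι] (v : ι → ℝ) (m : ℕ) : ℝ :=
  sSup {x | ∃ s : Finset ι, s.card = m ∧ x = ∑ i ∈ s, v i}

/-- Majorization `x ≺ y`: partial sums of largest entries of `x` are dominated
by those of `y`, with equal total sums. -/
def Maj {ι κ : Type} [Fintype ι] [Fintype κ] (x : ι → ℝ) (y : κ → ℝ) : Prop :=
  (∀ m : ℕ, 1 ≤ m → m < Fintype.card ι → eSum x m ≤ eSum y m) ∧
    ∑ i, x i = ∑ j, y j

/-- Strict majorization `x ◁ y`: all inequalities strict, total sums equal. -/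
def SMaj {ι κ : Type} [Fintype ι] [Fintype κ] (x : ι → ℝ) (y : κ → ℝ) : Prop :=
  (∀ m : ℕ, 1 ≤ m → m < Fintype.card ι → eSum x m < eSum y m) ∧
    ∑ i, x i = ∑ j, y j

/-- Global uniformity: smallest entry divided by largest entry. -/
noncomputable def gu {ι : Type} [Fintype ι] (v : ι → ℝ) : ℝ :=
  sInf (Set.range v) / sSup (Set.range v)

/-- The set of ratios `v b / v a` over consecutive distinct values `v b < v a`
(no value strictly in between). -/
def ratioSet {ι : Type} [Fintype ι] (v : ι → ℝ) : Set ℝ :=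
  {r | ∃ a b : ι, v b < v a ∧ (¬ ∃ c : ι, v b < v c ∧ v c < v a) ∧ r = v b / v a}

open Classical in
noncomputable def lu {ι : Type} [Fintype ι] (v : ι → ℝ) : ℝ :=
  if (∃ a b : ι, v a ≠ v b) then sInf (ratioSet v) else 1

open Classical in
/-- Maximal local uniformity: maximum ratio of consecutive distinct values;
`1` for a constant vector. -/
noncomputable def Lu {ι : Type} [Fintype ι] (v : ι → ℝ) : ℝ :=
  if (∃ a b : ι, v a ≠ v b) then sSup (ratioSet v) else 1

/-- Tensor (Kronecker) product of two vectors. -/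
def tens {ι κ : Type} (x : ι → ℝ) (y : κ → ℝ) : ι × κ → ℝ :=
  fun p => x p.1 * y p.2

/-- `k`-fold tensor power of a vector. -/
def tpow {n : ℕ} (v : Fin n → ℝ) (k : ℕ) : (Fin k → Fin n) → ℝ :=
  fun f => ∏ i, v (f i)

/-- A probability vector: nonnegative entries summing to one. -/
def IsProb {ι : Type} [Fintype ι] (v : ι → ℝ) : Prop :=
  (∀ i, 0 ≤ v i) ∧ ∑ i, v i = 1

/-- `v` sorted in non-increasing order. -/
noncomputable def sortDesc {n : ℕ} (v : Fin n → ℝ) : Fin n → ℝ :=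
  fun i => v (Tuple.sort v i.rev)

/-- Shannon entropy (base 2), with the convention `0 log 0 = 0`. -/
noncomputable def entH {ι : Type} [Fintype ι] (v : ι → ℝ) : ℝ :=
  -∑ i, v i * Real.logb 2 (v i)


/-!
Put `D m = eSum y m - eSum x m`, so `D ≥ 0`, `D 0 = D n = 0`, and `D` is positive somewhere
because `y ⊀ x`. Take a maximal run `l < m < r` on which `D > 0`. Since
`eSum v (m + 1) - eSum v m` is the `m`-th entry of `v` sorted decreasingly (from `0`), `D` rising
at `l` and falling at `r - 1` gives `y↓ l > x↓ l ≥ x↓ (r - 1) > y↓ (r - 1)`. Moving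
`ε ≤ min (y↓ l - y↓ (r - 1)) (min_{l<m<r} D m)` from the entry `y↓ l` to the entry `y↓ (r - 1)`
lowers the top-`m` sums of `y` by `ε` only for `l < m < r`, so `x ≺ z`; and `z ≺ y` holds for
any transfer no larger than the gap it closes.
-/

section ESum

variable {ι κ : Type} [Fintype ι] [Fintype κ]

lemma bddAbove_sums (v : ι → ℝ) (m : ℕ) :
    BddAbove {x | ∃ s : Finset ι, s.card = m ∧ x = ∑ i ∈ s, v i} :=
  (Set.finite_range fun s : Finset ι => ∑ i ∈ s, v i).bddAbove.mono
    (by rintro _ ⟨s, -, rfl⟩; exact ⟨s, rfl⟩)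

lemma sum_le_eSum (v : ι → ℝ) (s : Finset ι) : ∑ i ∈ s, v i ≤ eSum v s.card :=
  le_csSup (bddAbove_sums v _) ⟨s, rfl, rfl⟩

lemma eSum_le {v : ι → ℝ} {m : ℕ} {c : ℝ} (hm : m ≤ Fintype.card ι)
    (h : ∀ s : Finset ι, s.card = m → ∑ i ∈ s, v i ≤ c) : eSum v m ≤ c := by
  obtain ⟨s, hs⟩ := Finset.exists_subset_card_eq (s := univ) hm
  exact csSup_le ⟨_, s, hs.2, rfl⟩ (by rintro _ ⟨t, ht, rfl⟩; exact h t ht)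

lemma eSum_zero (v : ι → ℝ) : eSum v 0 = 0 := by
  have : {x | ∃ s : Finset ι, s.card = 0 ∧ x = ∑ i ∈ s, v i} = {0} := by
    ext x; simp [Finset.card_eq_zero]
  rw [eSum, this, csSup_singleton]

lemma eSum_card (v : ι → ℝ) : eSum v (Fintype.card ι) = ∑ i, v i := by
  have : {x | ∃ s : Finset ι, s.card = Fintype.card ι ∧ x = ∑ i ∈ s, v i} = {∑ i, v i} := by
    ext x; simp [Finset.card_eq_iff_eq_univ]
  rw [eSum, this, csSup_singleton]

lemma eSum_comp_equiv (v : ι → ℝ) (σ : κ ≃ ι) (m : ℕ) : eSum (v ∘ σ) m = eSum v m := by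
  have key (s : Finset κ) : ∑ i ∈ s, (v ∘ σ) i = ∑ i ∈ s.map σ.toEmbedding, v i := by
    simp [Finset.sum_map]
  unfold eSum
  congr 1
  ext x
  constructor
  · rintro ⟨s, hs, rfl⟩
    exact ⟨s.map σ.toEmbedding, by simp [hs], key s⟩
  · rintro ⟨t, ht, rfl⟩
    refine ⟨t.map σ.symm.toEmbedding, by simp [ht], ?_⟩
    rw [key, Finset.map_map]
    simp

lemma maj_comp_equiv_right {x : κ → ℝ} (v : ι → ℝ) (σ : ι ≃ ι) :
    Maj x (v ∘ σ) ↔ Maj x v := by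
  simp only [Maj, eSum_comp_equiv, Function.comp_apply, Equiv.sum_comp σ v]

lemma exists_eSum_lt_of_not_maj {x : ι → ℝ} {y : κ → ℝ} (hsum : ∑ i, x i = ∑ j, y j)
    (h : ¬ Maj y x) : ∃ m, 1 ≤ m ∧ m < Fintype.card κ ∧ eSum x m < eSum y m := by
  by_contra! hle
  exact h ⟨hle, hsum.symm⟩

end ESum

section Transfer

variable {ι κ : Type} [DecidableEq ι] [DecidableEq κ]

def transfer (v : ι → ℝ) (a b : ι) (ε : ℝ) : ι → ℝ :=
  Function.update (Function.update v a (v a - ε)) b (v b + ε)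

lemma transfer_eq_add_single_sub_single {a b : ι} (hab : a ≠ b) (v : ι → ℝ) (ε : ℝ) :
    transfer v a b ε = v + Pi.single b ε - Pi.single a ε := by
  ext i
  rcases eq_or_ne i b with rfl | hib
  · simp [transfer, hab.symm]
  rcases eq_or_ne i a with rfl | hia
  · simp [transfer, hib]
  · simp [transfer, hia, hib]

lemma sum_transfer {a b : ι} (hab : a ≠ b) (v : ι → ℝ) (ε : ℝ) (s : Finset ι) :
    ∑ i ∈ s, transfer v a b ε i
      = ∑ i ∈ s, v i + (if b ∈ s then ε else 0) - (if a ∈ s then ε else 0) := by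
  simp only [transfer_eq_add_single_sub_single hab, Pi.add_apply, Pi.sub_apply,
    Finset.sum_sub_distrib, Finset.sum_add_distrib, Finset.sum_pi_single']

lemma transfer_comp_equiv (v : ι → ℝ) (σ : κ ≃ ι) (p q : κ) (ε : ℝ) :
    transfer v (σ p) (σ q) ε ∘ σ = transfer (v ∘ σ) p q ε := by
  simp only [transfer, Function.update_comp_equiv, Equiv.symm_apply_apply, Function.comp_apply]

variable [Fintype ι]

lemma transfer_maj_self {v : ι → ℝ} {a b : ι} {ε : ℝ} (hab : a ≠ b) (hε : 0 ≤ ε)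
    (hεab : ε ≤ v a - v b) : Maj (transfer v a b ε) v := by
  refine ⟨fun m _ hm => eSum_le hm.le fun s hs => ?_, by simp [sum_transfer hab]⟩
  rw [sum_transfer hab, ← hs]
  by_cases has : a ∈ s
  · have := sum_le_eSum v s
    split_ifs <;> linarith
  by_cases hbs : b ∈ s
  · -- exchanging `b` for `a` in `s` bounds the transferred sum
    have hswap := sum_le_eSum v (insert a (s.erase b))
    rw [Finset.sum_insert fun h => has (Finset.mem_of_mem_erase h),
      Finset.card_insert_of_notMem fun h => has (Finset.mem_of_mem_erase h),
      Finset.card_erase_add_one hbs] at hswap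
    rw [if_pos hbs, if_neg has, ← Finset.sum_erase_add s v hbs]
    linarith
  · rw [if_neg hbs, if_neg has]
    simpa using sum_le_eSum v s

end Transfer

section Sorted

variable {n : ℕ}

noncomputable def sortDescPerm (v : Fin n → ℝ) : Equiv.Perm (Fin n) :=
  Fin.revPerm.trans (Tuple.sort v)

lemma sortDesc_eq_comp (v : Fin n → ℝ) : sortDesc v = v ∘ sortDescPerm v := rfl

lemma antitone_sortDesc (v : Fin n → ℝ) : Antitone (sortDesc v) :=
  fun _ _ hij => Tuple.monotone_sort v (Fin.rev_le_rev.mpr hij)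

lemma sum_filter_val_lt_succ (w : Fin n → ℝ) (i : Fin n) :
    ∑ j : Fin n with j.val < i.val + 1, w j = ∑ j : Fin n with j.val < i.val, w j + w i := by
  have : ({j | j.val < i.val + 1} : Finset (Fin n)) =
      insert i ({j | j.val < i.val} : Finset (Fin n)) := by
    ext j
    simp only [mem_filter, mem_univ, true_and, mem_insert, Fin.ext_iff]
    omega
  rw [this, sum_insert (by simp), add_comm]

lemma Antitone.sum_le_sum_filter_val_lt_card {w : Fin n → ℝ} (hw : Antitone w)
    (s : Finset (Fin n)) :
    ∑ i ∈ s, w i ≤ ∑ i : Fin n with i.val < s.card, w i := by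
  induction s using Finset.induction_on_max with
  | empty => simp
  | insert a s hlt ih =>
    have has : a ∉ s := fun h => lt_irrefl a (hlt a h)
    have hcard : s.card ≤ a := by
      simpa using Finset.card_le_card fun x hx => Finset.mem_Iio.2 (hlt x hx)
    rw [sum_insert has, card_insert_of_notMem has,
      sum_filter_val_lt_succ w ⟨s.card, hcard.trans_lt a.2⟩, add_comm]
    exact add_le_add ih (hw (Fin.le_def.2 hcard))

lemma Antitone.eSum_eq {w : Fin n → ℝ} (hw : Antitone w) {m : ℕ} (hm : m ≤ n) :
    eSum w m = ∑ i : Fin n with i.val < m, w i := by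
  have hcard : #{i : Fin n | i.val < m} = m := by simp [Fin.card_filter_val_lt, hm]
  refine le_antisymm (eSum_le (by simpa using hm) fun s hs => ?_) ?_
  · exact hs ▸ hw.sum_le_sum_filter_val_lt_card s
  simpa [hcard] using sum_le_eSum w {i : Fin n | i.val < m}

lemma eSum_eq_sum_sortDesc (v : Fin n → ℝ) {m : ℕ} (hm : m ≤ n) :
    eSum v m = ∑ i : Fin n with i.val < m, sortDesc v i := by
  rw [← (antitone_sortDesc v).eSum_eq hm, sortDesc_eq_comp, eSum_comp_equiv]

lemma eSum_succ_sub_eSum (v : Fin n → ℝ) (i : Fin n) :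
    eSum v (i + 1) - eSum v i = sortDesc v i := by
  rw [eSum_eq_sum_sortDesc v i.isLt, eSum_eq_sum_sortDesc v i.isLt.le, sum_filter_val_lt_succ]
  ring

lemma sortDesc_lt_sortDesc_of_eSum {x y : Fin n → ℝ} {i j : Fin n} (hij : i ≤ j)
    (hi : eSum y i ≤ eSum x i) (hi' : eSum x (i + 1) < eSum y (i + 1))
    (hj : eSum x j < eSum y j) (hj' : eSum y (j + 1) ≤ eSum x (j + 1)) :
    sortDesc y j < sortDesc y i := by
  have := antitone_sortDesc x hij
  have := eSum_succ_sub_eSum x i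
  have := eSum_succ_sub_eSum x j
  have := eSum_succ_sub_eSum y i
  have := eSum_succ_sub_eSum y j
  linarith

lemma Maj.maj_transfer_of_antitone {x w : Fin n → ℝ} (hxw : Maj x w) (hw : Antitone w)
    {p q : Fin n} (hpq : p < q) {ε : ℝ}
    (hεD : ∀ m : ℕ, p < m → m ≤ q → ε ≤ eSum w m - eSum x m) :
    Maj x (transfer w p q ε) := by
  refine ⟨fun m hm hmn => ?_, by simp [hxw.2, sum_transfer hpq.ne]⟩
  rw [Fintype.card_fin] at hmn
  have hxm := hxw.1 m hm (by simpa using hmn)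
  have hlow := sum_le_eSum (transfer w p q ε) {i : Fin n | i.val < m}
  rw [sum_transfer hpq.ne, ← hw.eSum_eq hmn.le, Fin.card_filter_val_lt,
    min_eq_right hmn.le] at hlow
  simp only [mem_filter, mem_univ, true_and] at hlow
  by_cases hqm : q.val < m
  · rw [if_pos hqm, if_pos ((Fin.lt_def.1 hpq).trans hqm)] at hlow
    linarith
  rw [if_neg hqm] at hlow
  by_cases hpm : p.val < m
  · rw [if_pos hpm] at hlow
    linarith [hεD m hpm (not_lt.1 hqm)]
  · rw [if_neg hpm] at hlow
    linarith

end Sorted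

lemma Nat.exists_maximal_run {P : ℕ → Prop} {m₀ n : ℕ} (h0 : ¬ P 0) (hm₀ : P m₀) (hn : ¬ P n)
    (hm₀n : m₀ ≤ n) :
    ∃ l r, l < m₀ ∧ m₀ < r ∧ r ≤ n ∧ ¬ P l ∧ ¬ P r ∧ ∀ m, l < m → m < r → P m := by
  classical
  have hm₀n' : m₀ < n := lt_of_le_of_ne hm₀n fun h => hn (h ▸ hm₀)
  have hr : ∃ r, m₀ < r ∧ ¬ P r := ⟨n, hm₀n', hn⟩
  have hl : ¬ P (Nat.findGreatest (¬ P ·) m₀) :=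
    Nat.findGreatest_spec (P := (¬ P ·)) (Nat.zero_le _) h0
  have hlm : Nat.findGreatest (¬ P ·) m₀ < m₀ :=
    lt_of_le_of_ne (Nat.findGreatest_le _) fun h => hl (by rwa [h])
  refine ⟨_, Nat.find hr, hlm, (Nat.find_spec hr).1, Nat.find_min' hr ⟨hm₀n', hn⟩,
    hl, (Nat.find_spec hr).2, fun m hlm' hmr => ?_⟩
  rcases le_or_gt m m₀ with hmm | hmm
  · simpa using Nat.findGreatest_is_greatest hlm' hmm
  · by_contra hm
    exact Nat.find_min hr hmr ⟨hmm, hm⟩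

lemma Finset.exists_pos_forall_le {α : Type*} (s : Finset α) {f : α → ℝ}
    (hf : ∀ i ∈ s, 0 < f i) : ∃ δ > 0, ∀ i ∈ s, δ ≤ f i := by
  classical
  induction s using Finset.induction_on with
  | empty => exact ⟨1, one_pos, by simp⟩
  | insert a s _ ih =>
    obtain ⟨δ, hδ, hδs⟩ := ih fun i hi => hf i (mem_insert_of_mem hi)
    refine ⟨min (f a) δ, lt_min (hf a (mem_insert_self a s)) hδ, ?_⟩
    simp only [mem_insert, forall_eq_or_imp]
    exact ⟨min_le_left _ _, fun i hi => (min_le_right _ _).trans (hδs i hi)⟩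

theorem exists_transfer_between_general {n : ℕ} (y x : Fin n → ℝ)
    (hxy : Maj x y) (hne : ¬ Maj y x) :
    ∃ (a b : Fin n) (ε : ℝ), 0 < ε ∧ y b < y a ∧
      Maj x (Function.update (Function.update y a (y a - ε)) b (y b + ε)) ∧
      Maj (Function.update (Function.update y a (y a - ε)) b (y b + ε)) y := by
  obtain ⟨m₀, hm₀, hm₀n, hlt⟩ := exists_eSum_lt_of_not_maj hxy.2 hne
  rw [Fintype.card_fin] at hm₀n
  have hn : eSum x n = eSum y n := by
    simpa using (eSum_card x).trans (hxy.2.trans (eSum_card y).symm)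
  obtain ⟨l, r, hlm, hmr, hrn, hl, hr, hrun⟩ :=
    Nat.exists_maximal_run (P := fun m => eSum x m < eSum y m) (by simp [eSum_zero]) hlt
      hn.not_lt hm₀n.le
  obtain ⟨p, hp⟩ : ∃ p : Fin n, p.val = l := ⟨⟨l, by omega⟩, rfl⟩
  obtain ⟨q, hq⟩ : ∃ q : Fin n, q.val = r - 1 := ⟨⟨r - 1, by omega⟩, rfl⟩
  have hpq : p < q := Fin.lt_def.2 (by omega)
  have hgap : sortDesc y q < sortDesc y p :=
    sortDesc_lt_sortDesc_of_eSum hpq.le (hp ▸ not_lt.1 hl) (hrun _ (by omega) (by omega))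
      (hrun _ (by omega) (by omega)) (by rw [show q.val + 1 = r by omega]; exact not_lt.1 hr)
  obtain ⟨δ, hδ, hδD⟩ := (Finset.Ioo l r).exists_pos_forall_le (f := fun m => eSum y m - eSum x m)
    fun m hm => sub_pos.2 (hrun m (mem_Ioo.1 hm).1 (mem_Ioo.1 hm).2)
  set ε := min (sortDesc y p - sortDesc y q) δ
  have hε : 0 < ε := lt_min (sub_pos.2 hgap) hδ
  set σ := sortDescPerm y
  refine ⟨σ p, σ q, ε, hε, hgap, ?_,
    transfer_maj_self (σ.injective.ne hpq.ne) hε.le (min_le_left _ _)⟩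
  change Maj x (transfer y (σ p) (σ q) ε)
  rw [← maj_comp_equiv_right _ σ, transfer_comp_equiv, ← sortDesc_eq_comp]
  refine ((maj_comp_equiv_right y σ).2 hxy).maj_transfer_of_antitone (antitone_sortDesc y) hpq
    fun m hpm hmq => ?_
  rw [eSum_comp_equiv]
  exact (min_le_right _ _).trans (hδD m (mem_Ioo.2 ⟨by omega, by omega⟩))

/-- the Robin Hood / transfer lemma for majorization: if `x ≺ y`
but not `y ≺ x`, there is an `ε`-transfer from a larger entry of `y` to a
smaller one yielding `z` with `x ≺ z ≺ y`. -/
theorem exists_transfer_between {n : ℕ} (y x : Fin n → ℝ)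
    (hy : ∀ i, 0 ≤ y i) (hs : ∃ a b : Fin n, y a ≠ y b)
    (hxy : Maj x y) (hne : ¬ Maj y x) :
    ∃ (a b : Fin n) (ε : ℝ), 0 < ε ∧ y b < y a ∧
      Maj x (Function.update (Function.update y a (y a - ε)) b (y b + ε)) ∧
      Maj (Function.update (Function.update y a (y a - ε)) b (y b + ε)) y :=
  exists_transfer_between_general y x hxy hne
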